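/- Depth bound on box questions: suppose compatible passive configuration C1 and active configuration C2 (with term M and joint name environment γ = γ1 ⊎ γ2) produce a trace t consisting only of answer and run-box actions such that every prefix of t contains at least as many run-box questions as answers; then the number of run-box questions in t is at most depth_γ(M), where depth_γ(M) is defined recursively as the sum over all occurrences of box names b in M of (depth_γ(γ(b)) + 1). -/

import Mathlib

/-! Syntax of LMML, extended with function names, box names and unboxed
    box names `#b^δ`, as used in the operational game semantics. -/

abbrev LVar := String
abbrev GVar := String
abbrev Loc := Nat

inductive Ty : Type where
  | unit : Ty
  | int : Ty
  | arrow : Ty → Ty → Ty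
  | ref : Ty → Ty
  | box : List (LVar × Ty) → Ty → Ty

abbrev LCtx := List (LVar × Ty)
abbrev GCtx := List (GVar × (LCtx × Ty))
abbrev SCtx := List (Loc × Ty)

def lookup {κ α : Type} [BEq κ] (l : List (κ × α)) (k : κ) : Option α :=
  (l.find? (fun p => p.1 == k)).map (·.2)

inductive Tm : Type where
  | unit : Tm
  | int : Int → Tm
  | lvar : LVar → Tm
  | gvar : GVar → List (LVar × Tm) → Tm
  | loc : Loc → Tm
  | lam : LVar → Tm → Tm
  | app : Tm → Tm → Tm
  | rec' : LVar → LVar → Tm → Tm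
  | arith : (Int → Int → Int) → Tm → Tm → Tm
  | ite : Tm → Tm → Tm → Tm
  | ref : Tm → Tm
  | deref : Tm → Tm
  | assign : Tm → Tm → Tm
  | box : Tm → Tm
  | letbox : GVar → Tm → Tm → Tm
  /-- a function name `f ∈ FNames_{T1→T2,i}` -/
  | fname : Nat → Ty → Ty → Nat → Tm
  /-- a box name `b ∈ BNames_{□(Γ⊢T),1}` -/
  | bname : Nat → LCtx → Ty → Tm
  /-- `#b^δ` : an unboxed box name under an explicit substitution -/
  | unbox : Nat → LCtx → Ty → List (LVar × Tm) → Tm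

inductive IsValue : Tm → Prop where
  | unit : IsValue .unit
  | int {n} : IsValue (.int n)
  | loc {l} : IsValue (.loc l)
  | lvar {x} : IsValue (.lvar x)
  | lam {x M} : IsValue (.lam x M)
  | rec' {f x M} : IsValue (.rec' f x M)
  | box {M} : IsValue (.box M)
  | fname {f T1 T2 j} : IsValue (.fname f T1 T2 j)
  | bname {b G T} : IsValue (.bname b G T)

def eraseKey {α : Type} (x : String) (l : List (String × α)) : List (String × α) :=
  l.filter (fun p => p.1 ≠ x)

mutual
def Tm.lsubst : Tm → List (LVar × Tm) → Tm
  | .unit, _ => .unit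
  | .int n, _ => .int n
  | .lvar x, δ => (lookup δ x).getD (.lvar x)
  | .gvar u δ0, δ => .gvar u (lsubstList δ0 δ)
  | .loc l, _ => .loc l
  | .lam x M, δ => .lam x (M.lsubst (eraseKey x δ))
  | .app M N, δ => .app (M.lsubst δ) (N.lsubst δ)
  | .rec' f x M, δ => .rec' f x (M.lsubst (eraseKey x (eraseKey f δ)))
  | .arith op M N, δ => .arith op (M.lsubst δ) (N.lsubst δ)
  | .ite M N P, δ => .ite (M.lsubst δ) (N.lsubst δ) (P.lsubst δ)
  | .ref M, δ => .ref (M.lsubst δ)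
  | .deref M, δ => .deref (M.lsubst δ)
  | .assign M N, δ => .assign (M.lsubst δ) (N.lsubst δ)
  | .box M, _ => .box M
  | .letbox u M N, δ => .letbox u (M.lsubst δ) (N.lsubst δ)
  | .fname f T1 T2 j, _ => .fname f T1 T2 j
  | .bname b G T, _ => .bname b G T
  | .unbox b G T δ0, δ => .unbox b G T (lsubstList δ0 δ)

def lsubstList : List (LVar × Tm) → List (LVar × Tm) → List (LVar × Tm)
  | [], _ => []
  | (x, V) :: rest, δ => (x, V.lsubst δ) :: lsubstList rest δ
end

mutual
def Tm.gsubst : Tm → List (GVar × Tm) → Tm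
  | .unit, _ => .unit
  | .int n, _ => .int n
  | .lvar x, _ => .lvar x
  | .gvar u δ0, σ =>
      match lookup σ u with
      | some M0 => M0.lsubst (gsubstList δ0 σ)
      | none => .gvar u (gsubstList δ0 σ)
  | .loc l, _ => .loc l
  | .lam x M, σ => .lam x (M.gsubst σ)
  | .app M N, σ => .app (M.gsubst σ) (N.gsubst σ)
  | .rec' f x M, σ => .rec' f x (M.gsubst σ)
  | .arith op M N, σ => .arith op (M.gsubst σ) (N.gsubst σ)
  | .ite M N P, σ => .ite (M.gsubst σ) (N.gsubst σ) (P.gsubst σ)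
  | .ref M, σ => .ref (M.gsubst σ)
  | .deref M, σ => .deref (M.gsubst σ)
  | .assign M N, σ => .assign (M.gsubst σ) (N.gsubst σ)
  | .box M, σ => .box (M.gsubst σ)
  | .letbox u M N, σ => .letbox u (M.gsubst σ) (N.gsubst (eraseKey u σ))
  | .fname f T1 T2 j, _ => .fname f T1 T2 j
  | .bname b G T, _ => .bname b G T
  | .unbox b G T δ0, σ => .unbox b G T (gsubstList δ0 σ)

def gsubstList : List (LVar × Tm) → List (GVar × Tm) → List (LVar × Tm)
  | [], _ => []
  | (x, V) :: rest, σ => (x, V.gsubst σ) :: gsubstList rest σ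
end

/-! Substitution of box names for global variables: `u^δ ↦ #b^δ`. -/
mutual
def Tm.gsubstB : Tm → List (GVar × (Nat × LCtx × Ty)) → Tm
  | .unit, _ => .unit
  | .int n, _ => .int n
  | .lvar x, _ => .lvar x
  | .gvar u δ0, η =>
      match lookup η u with
      | some (b, G, T) => .unbox b G T (gsubstBList δ0 η)
      | none => .gvar u (gsubstBList δ0 η)
  | .loc l, _ => .loc l
  | .lam x M, η => .lam x (M.gsubstB η)
  | .app M N, η => .app (M.gsubstB η) (N.gsubstB η)
  | .rec' f x M, η => .rec' f x (M.gsubstB η)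
  | .arith op M N, η => .arith op (M.gsubstB η) (N.gsubstB η)
  | .ite M N P, η => .ite (M.gsubstB η) (N.gsubstB η) (P.gsubstB η)
  | .ref M, η => .ref (M.gsubstB η)
  | .deref M, η => .deref (M.gsubstB η)
  | .assign M N, η => .assign (M.gsubstB η) (N.gsubstB η)
  | .box M, η => .box (M.gsubstB η)
  | .letbox u M N, η => .letbox u (M.gsubstB η) (N.gsubstB (eraseKey u η))
  | .fname f T1 T2 j, _ => .fname f T1 T2 j
  | .bname b G T, _ => .bname b G T
  | .unbox b G T δ0, η => .unbox b G T (gsubstBList δ0 η)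

def gsubstBList : List (LVar × Tm) → List (GVar × (Nat × LCtx × Ty)) → List (LVar × Tm)
  | [], _ => []
  | (x, V) :: rest, η => (x, V.gsubstB η) :: gsubstBList rest η
end

/-! Typing, extended with (Tm-Name) and (Tm-Unbox). -/
mutual
inductive Typing : SCtx → GCtx → LCtx → Nat → Tm → Ty → Prop where
  | unit {Sg Ps G i} : Typing Sg Ps G i .unit .unit
  | int {Sg Ps G i n} : Typing Sg Ps G i (.int n) .int
  | lvar {Sg Ps G i x T} : lookup G x = some T → Typing Sg Ps G i (.lvar x) T
  | gvar {Sg Ps G i u δ G' T} :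
      lookup Ps u = some (G', T) → SubstTyping Sg Ps G i δ G' →
      Typing Sg Ps G i (.gvar u δ) T
  | loc {Sg Ps G i l T} : lookup Sg l = some T → Typing Sg Ps G i (.loc l) (.ref T)
  | lam {Sg Ps G i x M T1 T2} :
      Typing Sg Ps ((x, T1) :: G) i M T2 → Typing Sg Ps G i (.lam x M) (.arrow T1 T2)
  | app {Sg Ps G i M1 M2 T1 T2} :
      Typing Sg Ps G i M1 (.arrow T1 T2) → Typing Sg Ps G i M2 T1 →
      Typing Sg Ps G i (.app M1 M2) T2
  | rec' {Sg Ps G i f x M T1 T2} :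
      Typing Sg Ps ((x, T1) :: (f, .arrow T1 T2) :: G) i M T2 →
      Typing Sg Ps G i (.rec' f x M) (.arrow T1 T2)
  | arith {Sg Ps G i op M1 M2} :
      Typing Sg Ps G i M1 .int → Typing Sg Ps G i M2 .int →
      Typing Sg Ps G i (.arith op M1 M2) .int
  | ite {Sg Ps G i M1 M2 M3 T} :
      Typing Sg Ps G i M1 .int → Typing Sg Ps G i M2 T → Typing Sg Ps G i M3 T →
      Typing Sg Ps G i (.ite M1 M2 M3) T
  | ref {Sg Ps G i M T} : Typing Sg Ps G i M T → Typing Sg Ps G i (.ref M) (.ref T)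
  | deref {Sg Ps G i M T} : Typing Sg Ps G i M (.ref T) → Typing Sg Ps G i (.deref M) T
  | assign {Sg Ps G i M1 M2 T} :
      Typing Sg Ps G i M1 (.ref T) → Typing Sg Ps G i M2 T →
      Typing Sg Ps G i (.assign M1 M2) .unit
  | box {Sg Ps G G' M T} :
      Typing Sg Ps G' 0 M T → Typing Sg Ps G 1 (.box M) (.box G' T)
  | letbox {Sg Ps G u M1 M2 G' T T'} :
      Typing Sg Ps G 1 M1 (.box G' T) →
      Typing Sg ((u, (G', T)) :: Ps) G 1 M2 T' →
      Typing Sg Ps G 1 (.letbox u M1 M2) T'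
  | fname {Sg Ps G i f T1 T2 j} : j ≤ i →
      Typing Sg Ps G i (.fname f T1 T2 j) (.arrow T1 T2)
  | bname {Sg Ps G b G' T} :
      Typing Sg Ps G 1 (.bname b G' T) (.box G' T)
  | unbox {Sg Ps G i b G' T δ} :
      SubstTyping Sg Ps G i δ G' → Typing Sg Ps G i (.unbox b G' T δ) T

inductive SubstTyping : SCtx → GCtx → LCtx → Nat → List (LVar × Tm) → LCtx → Prop where
  | nil {Sg Ps G i} : SubstTyping Sg Ps G i [] []
  | cons {Sg Ps G i x V T δ G'} :
      Typing Sg Ps G i V T → IsValue V → SubstTyping Sg Ps G i δ G' →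
      SubstTyping Sg Ps G i ((x, V) :: δ) ((x, T) :: G')
end

def GSubstTyping (Sg : SCtx) (Ps : GCtx) (σ : List (GVar × Tm)) (Ps' : GCtx) : Prop :=
  (∀ u, (lookup Ps' u).isSome ↔ (lookup σ u).isSome) ∧
  (∀ u G' T, lookup Ps' u = some (G', T) →
    ∃ M, lookup σ u = some M ∧ Typing Sg Ps G' 0 M T)

abbrev Heap := Loc → Option Tm

def hupdate (h : Heap) (l : Loc) (V : Tm) : Heap :=
  fun l' => if l' = l then some V else h l'

def HeapTyped (Sg : SCtx) (Ps : GCtx) (G : LCtx) (h : Heap) : Prop :=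
  (∀ l, (lookup Sg l).isSome ↔ (h l).isSome) ∧
  (∀ l T, lookup Sg l = some T →
    ∃ V, h l = some V ∧ IsValue V ∧ Typing Sg Ps G 1 V T)

def SCtxLe (Sg Sg' : SCtx) : Prop :=
  ∀ l T, lookup Sg l = some T → lookup Sg' l = some T

inductive ECtx : Type where
  | hole : ECtx
  | appL : ECtx → Tm → ECtx
  | appR : Tm → ECtx → ECtx
  | arithL : (Int → Int → Int) → ECtx → Tm → ECtx
  | arithR : (Int → Int → Int) → Tm → ECtx → ECtx
  | ite : ECtx → Tm → Tm → ECtx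
  | ref : ECtx → ECtx
  | deref : ECtx → ECtx
  | assignL : ECtx → Tm → ECtx
  | assignR : Tm → ECtx → ECtx
  | letboxL : GVar → ECtx → Tm → ECtx
  | letboxR : GVar → Tm → ECtx → ECtx

def ECtx.plug : ECtx → Tm → Tm
  | .hole, M => M
  | .appL K N, M => .app (K.plug M) N
  | .appR V K, M => .app V (K.plug M)
  | .arithL op K N, M => .arith op (K.plug M) N
  | .arithR op V K, M => .arith op V (K.plug M)
  | .ite K N P, M => .ite (K.plug M) N P
  | .ref K, M => .ref (K.plug M)
  | .deref K, M => .deref (K.plug M)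
  | .assignL K N, M => .assign (K.plug M) N
  | .assignR V K, M => .assign V (K.plug M)
  | .letboxL u K N, M => .letbox u (K.plug M) N
  | .letboxR u V K, M => .letbox u V (K.plug M)

inductive ECtxWf : ECtx → Prop where
  | hole : ECtxWf .hole
  | appL {K N} : ECtxWf K → ECtxWf (.appL K N)
  | appR {V K} : IsValue V → ECtxWf K → ECtxWf (.appR V K)
  | arithL {op K N} : ECtxWf K → ECtxWf (.arithL op K N)
  | arithR {op V K} : IsValue V → ECtxWf K → ECtxWf (.arithR op V K)
  | ite {K N P} : ECtxWf K → ECtxWf (.ite K N P)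
  | ref {K} : ECtxWf K → ECtxWf (.ref K)
  | deref {K} : ECtxWf K → ECtxWf (.deref K)
  | assignL {K N} : ECtxWf K → ECtxWf (.assignL K N)
  | assignR {V K} : IsValue V → ECtxWf K → ECtxWf (.assignR V K)
  | letboxL {u K N} : ECtxWf K → ECtxWf (.letboxL u K N)
  | letboxR {u V K} : IsValue V → ECtxWf K → ECtxWf (.letboxR u V K)

inductive Step : Tm × Heap → Tm × Heap → Prop where
  | beta {x M V h} : IsValue V →
      Step (.app (.lam x M) V, h) (M.lsubst [(x, V)], h)
  | arith {op n m h} :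
      Step (.arith op (.int n) (.int m), h) (.int (op n m), h)
  | iteT {n M N h} : n ≠ 0 → Step (.ite (.int n) M N, h) (M, h)
  | iteF {M N h} : Step (.ite (.int 0) M N, h) (N, h)
  | ref {V l h} : IsValue V → h l = none →
      Step (.ref V, h) (.loc l, hupdate h l V)
  | deref {l V h} : h l = some V → Step (.deref (.loc l), h) (V, h)
  | assign {l V h} : IsValue V → (h l).isSome →
      Step (.assign (.loc l) V, h) (.unit, hupdate h l V)
  | rec' {f x M V h} : IsValue V →
      Step (.app (.rec' f x M) V, h) (M.lsubst [(x, V), (f, .rec' f x M)], h)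
  | letbox {u M1 M2 h} :
      Step (.letbox u (.box M1) M2, h) (M2.gsubst [(u, M1)], h)
  | letboxName {u b G T M h} :
      Step (.letbox u (.bname b G T) M, h) (M.gsubstB [(u, (b, G, T))], h)
  | ktx {K M1 M2 h1 h2} : ECtxWf K → K ≠ .hole → Step (M1, h1) (M2, h2) →
      Step (K.plug M1, h1) (K.plug M2, h2)

abbrev StepStar : Tm × Heap → Tm × Heap → Prop := Relation.ReflTransGen Step

def Terminates (c : Tm × Heap) : Prop :=
  ∃ V h', IsValue V ∧ StepStar c (V, h')

def ECtxTyped (Sg : SCtx) (K : ECtx) (i : Nat) (T : Ty) (i' : Nat) (T' : Ty) : Prop :=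
  ECtxWf K ∧ ∀ N, Typing Sg [] [] i N T → Typing Sg [] [] i' (K.plug N) T'

/-! Abstract values, abstract heaps and abstract substitutions. -/

inductive AVal : Type where
  | unit : AVal
  | int : Int → AVal
  | loc : Loc → AVal
  | fname : Nat → Ty → Ty → Nat → AVal
  | bname : Nat → LCtx → Ty → AVal

def AVal.toTm : AVal → Tm
  | .unit => .unit
  | .int n => .int n
  | .loc l => .loc l
  | .fname f T1 T2 j => .fname f T1 T2 j
  | .bname b G T => .bname b G T

def AVal.name : AVal → Option Nat
  | .fname f _ _ _ => some f
  | .bname b _ _ => some b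
  | _ => none

def AVal.locSet : AVal → Set Loc
  | .loc l => {l}
  | _ => ∅

inductive AValTyped : SCtx → AVal → Ty → Prop where
  | unit {Sg} : AValTyped Sg .unit .unit
  | int {Sg n} : AValTyped Sg (.int n) .int
  | loc {Sg l T} : lookup Sg l = some T → AValTyped Sg (.loc l) (.ref T)
  | fname {Sg f T1 T2 j} : AValTyped Sg (.fname f T1 T2 j) (.arrow T1 T2)
  | bname {Sg b G T} : AValTyped Sg (.bname b G T) (.box G T)

def emptyEnv : Nat → Option Tm := fun _ => none

def single (n : Nat) (V : Tm) : Nat → Option Tm :=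
  fun m => if m = n then some V else none

def envJoin (γ1 γ2 : Nat → Option Tm) : Nat → Option Tm :=
  fun n => (γ1 n).orElse (fun _ => γ2 n)

def envDisj (γ1 γ2 : Nat → Option Tm) : Prop :=
  ∀ n, ¬((γ1 n).isSome ∧ (γ2 n).isSome)

/-- Value abstraction: functions and box values are abstracted by fresh
    names; ground values are represented literally. -/
inductive AbsVal : Tm → AVal → (Nat → Option Tm) → Prop where
  | unit : AbsVal .unit .unit emptyEnv
  | int {n} : AbsVal (.int n) (.int n) emptyEnv
  | loc {l} : AbsVal (.loc l) (.loc l) emptyEnv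
  | fn {V f T1 T2 j} :
      ((∃ x M, V = .lam x M) ∨ (∃ g x M, V = .rec' g x M) ∨
        (∃ f' T1' T2' j', V = .fname f' T1' T2' j')) →
      AbsVal V (.fname f T1 T2 j) (single f V)
  | bx {V b G T} :
      ((∃ M, V = .box M) ∨ (∃ b' G' T', V = .bname b' G' T')) →
      AbsVal V (.bname b G T) (single b V)

inductive AbsSubst : List (LVar × Tm) → List (LVar × AVal) → (Nat → Option Tm) → Prop where
  | nil : AbsSubst [] [] emptyEnv
  | cons {x V A γA δ ρ γ} :
      AbsVal V A γA → AbsSubst δ ρ γ → envDisj γA γ →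
      AbsSubst ((x, V) :: δ) ((x, A) :: ρ) (envJoin γA γ)

abbrev AHeap := Loc → Option AVal

def toHeap (χ : AHeap) : Heap := fun l => (χ l).map AVal.toTm

def heapPlus (h1 h2 : Heap) : Heap := fun l => (h1 l).orElse (fun _ => h2 l)

def chiNames (χ : AHeap) : Set Nat :=
  {n | ∃ l A, χ l = some A ∧ A.name = some n}

/-- Occurrence of a location in a term. -/
inductive LocIn : Loc → Tm → Prop where
  | loc {l} : LocIn l (.loc l)
  | gvar {l u δ x V} : (x, V) ∈ δ → LocIn l V → LocIn l (.gvar u δ)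
  | unbox {l b G T δ x V} : (x, V) ∈ δ → LocIn l V → LocIn l (.unbox b G T δ)
  | lam {l x M} : LocIn l M → LocIn l (.lam x M)
  | appL {l M N} : LocIn l M → LocIn l (.app M N)
  | appR {l M N} : LocIn l N → LocIn l (.app M N)
  | rec' {l f x M} : LocIn l M → LocIn l (.rec' f x M)
  | arithL {l op M N} : LocIn l M → LocIn l (.arith op M N)
  | arithR {l op M N} : LocIn l N → LocIn l (.arith op M N)
  | ite1 {l M N P} : LocIn l M → LocIn l (.ite M N P)
  | ite2 {l M N P} : LocIn l N → LocIn l (.ite M N P)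
  | ite3 {l M N P} : LocIn l P → LocIn l (.ite M N P)
  | ref {l M} : LocIn l M → LocIn l (.ref M)
  | deref {l M} : LocIn l M → LocIn l (.deref M)
  | assignL {l M N} : LocIn l M → LocIn l (.assign M N)
  | assignR {l M N} : LocIn l N → LocIn l (.assign M N)
  | box {l M} : LocIn l M → LocIn l (.box M)
  | letboxL {l u M N} : LocIn l M → LocIn l (.letbox u M N)
  | letboxR {l u M N} : LocIn l N → LocIn l (.letbox u M N)

/-- `Restrict h θ h'` : `h'` is the minimal subheap of `h` whose domain
    contains `θ` and is closed under locations reachable from stored values. -/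
def Restrict (h : Heap) (θ : Set Loc) (h' : Heap) : Prop :=
  (∀ l, (h' l).isSome → h' l = h l) ∧
  (∀ l ∈ θ, (h' l).isSome) ∧
  (∀ l V l', h' l = some V → LocIn l' V → (h' l').isSome) ∧
  (∀ S : Set Loc, θ ⊆ S →
    (∀ l ∈ S, ∀ V, h l = some V → ∀ l', LocIn l' V → l' ∈ S) →
    ∀ l, (h' l).isSome → l ∈ S)

/-- Abstraction of a heap: each stored value is abstracted, using pairwise
    disjoint fresh names recorded in `γ`. -/
def AbsHeap (h : Heap) (χ : AHeap) (γ : Nat → Option Tm) : Prop :=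
  (∀ l, (h l).isSome ↔ (χ l).isSome) ∧
  (∀ l V, h l = some V → ∃ A γl, χ l = some A ∧ AbsVal V A γl ∧
    ∀ n W, γl n = some W → γ n = some W) ∧
  (∀ l l' A A' n, l ≠ l' → χ l = some A → χ l' = some A' →
    A.name = some n → A'.name = some n → False) ∧
  (∀ n, (γ n).isSome ↔ n ∈ chiNames χ)

/-! Actions, configurations and the LTS. -/

inductive ActK : Type where
  | ans : AVal → ActK
  | qf : Nat → AVal → ActK
  | qb : Nat → List (LVar × AVal) → ActK

structure Act : Type where
  player : Bool
  k : ActK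
  Sg : SCtx
  χ : AHeap

def Act.dual (a : Act) : Act := { a with player := !a.player }

def Act.isAnsB (a : Act) : Bool := match a.k with | .ans _ => true | _ => false
def Act.isQbB (a : Act) : Bool := match a.k with | .qb _ _ => true | _ => false
def Act.isQfB (a : Act) : Bool := match a.k with | .qf _ _ => true | _ => false

structure PConf : Type where
  Sg : SCtx
  h : Heap
  γ : Nat → Option Tm
  φ : Set Nat
  ξ : List ECtx
  θ : Set Loc

structure AConf : Type where
  M : Tm
  i : Nat
  T : Ty
  Sg : SCtx
  h : Heap
  γ : Nat → Option Tm
  φ : Set Nat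
  ξ : List ECtx
  θ : Set Loc

def envDom (γ : Nat → Option Tm) : Set Nat := {n | (γ n).isSome}
def chiDom (χ : AHeap) : Set Loc := {l | (χ l).isSome}
def valNames (A : AVal) : Set Nat := {n | A.name = some n}
def rhoNames (ρ : List (LVar × AVal)) : Set Nat :=
  {n | ∃ p ∈ ρ, p.2.name = some n}
def rhoLocs (ρ : List (LVar × AVal)) : Set Loc :=
  {l | ∃ p ∈ ρ, l ∈ p.2.locSet}

/-- Silent (Pτ) transitions of active configurations. -/
def TauTrans (C C' : AConf) : Prop :=
  Step (C.M, C.h) (C'.M, C'.h) ∧ C'.i = C.i ∧ C'.T = C.T ∧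
  SCtxLe C.Sg C'.Sg ∧ C'.γ = C.γ ∧ C'.φ = C.φ ∧ C'.ξ = C.ξ ∧ C'.θ = C.θ

inductive TauN : Nat → AConf → AConf → Prop where
  | zero {C} : TauN 0 C C
  | succ {k C C' C''} : TauTrans C C' → TauN k C' C'' → TauN (k + 1) C C''

inductive NSteps : Nat → Tm × Heap → Tm × Heap → Prop where
  | zero {c} : NSteps 0 c c
  | succ {k c c' c''} : Step c c' → NSteps k c' c'' → NSteps (k + 1) c c''

/-- Player (program) visible transitions. -/
inductive PTrans : AConf → Act → PConf → Prop where
  | pa {V i T Sg h γ φ ξ θ A γA h' χ γH Sg'} :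
      IsValue V →
      AbsVal V A γA →
      Restrict h (θ ∪ A.locSet) h' →
      AbsHeap h' χ γH →
      envDisj γA γH →
      (∀ n, n ∈ envDom γA ∪ envDom γH → n ∉ φ) →
      (∀ l, (lookup Sg' l).isSome ↔ l ∈ chiDom χ) →
      SCtxLe Sg' Sg →
      PTrans ⟨V, i, T, Sg, h, γ, φ, ξ, θ⟩ ⟨true, .ans A, Sg', χ⟩
        ⟨Sg, h, envJoin γ (envJoin γA γH), φ ∪ envDom γA ∪ envDom γH, ξ, chiDom χ⟩
  | pqf {K f T1 T2 j V i T Sg h γ φ ξ θ A γA h' χ γH Sg'} :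
      ECtxWf K → IsValue V →
      f ∈ φ → γ f = none →
      AbsVal V A γA →
      Restrict h (θ ∪ A.locSet) h' →
      AbsHeap h' χ γH →
      envDisj γA γH →
      (∀ n, n ∈ envDom γA ∪ envDom γH → n ∉ φ) →
      (∀ l, (lookup Sg' l).isSome ↔ l ∈ chiDom χ) →
      SCtxLe Sg' Sg →
      PTrans ⟨K.plug (.app (.fname f T1 T2 j) V), i, T, Sg, h, γ, φ, ξ, θ⟩
        ⟨true, .qf f A, Sg', χ⟩
        ⟨Sg, h, envJoin γ (envJoin γA γH), φ ∪ envDom γA ∪ envDom γH, K :: ξ, chiDom χ⟩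
  | pqb {K b G0 T0 δ ρ i T Sg h γ φ ξ θ γA h' χ γH Sg'} :
      ECtxWf K →
      b ∈ φ → γ b = none →
      AbsSubst δ ρ γA →
      Restrict h (θ ∪ rhoLocs ρ) h' →
      AbsHeap h' χ γH →
      envDisj γA γH →
      (∀ n, n ∈ envDom γA ∪ envDom γH → n ∉ φ) →
      (∀ l, (lookup Sg' l).isSome ↔ l ∈ chiDom χ) →
      SCtxLe Sg' Sg →
      PTrans ⟨K.plug (.unbox b G0 T0 δ), i, T, Sg, h, γ, φ, ξ, θ⟩
        ⟨true, .qb b ρ, Sg', χ⟩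
        ⟨Sg, h, envJoin γ (envJoin γA γH), φ ∪ envDom γA ∪ envDom γH, K :: ξ, chiDom χ⟩

/-- Running a box value under a closing substitution: `#V[ρ]`. -/
def runBox : Tm → List (LVar × Tm) → Tm
  | .box M, δ => M.lsubst δ
  | .bname b G T, δ => .unbox b G T δ
  | V, _ => V

/-- Opponent (context) visible transitions. -/
inductive OTrans : PConf → Act → AConf → Prop where
  | oa {Sg h γ φ K ξ θ A Sg' χ i2 T2} :
      (∀ l, (l ∈ chiDom χ ∧ (h l).isSome) ↔ l ∈ θ) →
      (∀ n, n ∈ valNames A ∪ chiNames χ → n ∉ φ) →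
      OTrans ⟨Sg, h, γ, φ, K :: ξ, θ⟩ ⟨false, .ans A, Sg', χ⟩
        ⟨K.plug A.toTm, i2, T2, Sg' ++ Sg, heapPlus (toHeap χ) h, γ,
          φ ∪ valNames A ∪ chiNames χ, ξ, chiDom χ⟩
  | oqf {Sg h γ φ ξ θ f V A Sg' χ i3 T2} :
      γ f = some V →
      (∀ l, (l ∈ chiDom χ ∧ (h l).isSome) ↔ l ∈ θ) →
      (∀ n, n ∈ valNames A ∪ chiNames χ → n ∉ φ) →
      OTrans ⟨Sg, h, γ, φ, ξ, θ⟩ ⟨false, .qf f A, Sg', χ⟩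
        ⟨.app V A.toTm, i3, T2, Sg' ++ Sg, heapPlus (toHeap χ) h, γ,
          φ ∪ valNames A ∪ chiNames χ, ξ, chiDom χ⟩
  | oqb {Sg h γ φ ξ θ b V ρ Sg' χ i3 T2} :
      γ b = some V →
      (∀ l, (l ∈ chiDom χ ∧ (h l).isSome) ↔ l ∈ θ) →
      (∀ n, n ∈ rhoNames ρ ∪ chiNames χ → n ∉ φ) →
      OTrans ⟨Sg, h, γ, φ, ξ, θ⟩ ⟨false, .qb b ρ, Sg', χ⟩
        ⟨runBox V (ρ.map (fun p => (p.1, p.2.toTm))), i3, T2, Sg' ++ Sg,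
          heapPlus (toHeap χ) h, γ, φ ∪ rhoNames ρ ∪ chiNames χ, ξ, chiDom χ⟩

abbrev Conf := PConf ⊕ AConf

inductive VisTrans : Conf → Act → Conf → Prop where
  | p {A a P} : PTrans A a P → VisTrans (.inr A) a (.inl P)
  | o {P a A} : OTrans P a A → VisTrans (.inl P) a (.inr A)

inductive Steps : Conf → List Act → Conf → Prop where
  | refl {C} : Steps C [] C
  | tau {C1 C2 : AConf} {t C3} :
      TauTrans C1 C2 → Steps (.inr C2) t C3 → Steps (.inr C1) t C3
  | vis {C1 a C2 t C3} : VisTrans C1 a C2 → Steps C2 t C3 → Steps C1 (a :: t) C3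

/-- τ-free multi-step transitions. -/
inductive StepsV : Conf → List Act → Conf → Prop where
  | refl {C} : StepsV C [] C
  | vis {C1 a C2 t C3} : VisTrans C1 a C2 → StepsV C2 t C3 → StepsV C1 (a :: t) C3

/-- `t ∈ Tr(C)` : traces that empty the evaluation-context stack. -/
def InTraces (C : Conf) (t : List Act) : Prop :=
  ∃ P : PConf, Steps C t (.inl P) ∧ P.ξ = []

def dualTrace (t : List Act) : List Act := t.map Act.dual

def Act.isPA (a : Act) : Prop := a.player = true ∧ ∃ A, a.k = .ans A

/-- Synchronization `C1 | C2 ↓^t`. -/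
def Sync (C1 C2 : Conf) (t : List Act) : Prop :=
  (InTraces C1 t ∧ ∃ a, a.isPA ∧ InTraces C2 (dualTrace t ++ [a])) ∨
  (∃ a, a.isPA ∧ InTraces C1 (t ++ [a]) ∧ InTraces C2 (dualTrace t))

/-! ConfCompose of compatible configurations. -/

def ECtx.comp : ECtx → ECtx → ECtx
  | .hole, K1 => K1
  | .appL K N, K1 => .appL (K.comp K1) N
  | .appR V K, K1 => .appR V (K.comp K1)
  | .arithL op K N, K1 => .arithL op (K.comp K1) N
  | .arithR op V K, K1 => .arithR op V (K.comp K1)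
  | .ite K N P, K1 => .ite (K.comp K1) N P
  | .ref K, K1 => .ref (K.comp K1)
  | .deref K, K1 => .deref (K.comp K1)
  | .assignL K N, K1 => .assignL (K.comp K1) N
  | .assignR V K, K1 => .assignR V (K.comp K1)
  | .letboxL u K N, K1 => .letboxL u (K.comp K1) N
  | .letboxR u V K, K1 => .letboxR u V (K.comp K1)

/-- Unfolding of two interleaved evaluation-context stacks. -/
def mergeStacks : List ECtx → List ECtx → Option ECtx
  | [K], [] => some K
  | K1 :: ξ1, ξ2 => (mergeStacks ξ2 ξ1).map (fun K2 => K2.comp K1)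
  | [], _ => none
termination_by ξ1 ξ2 => ξ1.length + ξ2.length

/-! One resolution pass: replace names by the values they represent. -/
mutual
def Tm.nsubst : Tm → (Nat → Option Tm) → Tm
  | .unit, _ => .unit
  | .int n, _ => .int n
  | .lvar x, _ => .lvar x
  | .gvar u δ0, γ => .gvar u (nsubstList δ0 γ)
  | .loc l, _ => .loc l
  | .lam x M, γ => .lam x (M.nsubst γ)
  | .app M N, γ => .app (M.nsubst γ) (N.nsubst γ)
  | .rec' f x M, γ => .rec' f x (M.nsubst γ)
  | .arith op M N, γ => .arith op (M.nsubst γ) (N.nsubst γ)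
  | .ite M N P, γ => .ite (M.nsubst γ) (N.nsubst γ) (P.nsubst γ)
  | .ref M, γ => .ref (M.nsubst γ)
  | .deref M, γ => .deref (M.nsubst γ)
  | .assign M N, γ => .assign (M.nsubst γ) (N.nsubst γ)
  | .box M, γ => .box (M.nsubst γ)
  | .letbox u M N, γ => .letbox u (M.nsubst γ) (N.nsubst γ)
  | .fname f T1 T2 j, γ => (γ f).getD (.fname f T1 T2 j)
  | .bname b G T, γ => (γ b).getD (.bname b G T)
  | .unbox b G T δ0, γ =>
      match γ b with
      | some (.box M) => M.lsubst (nsubstList δ0 γ)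
      | some (.bname b' G' T') => .unbox b' G' T' (nsubstList δ0 γ)
      | _ => .unbox b G T (nsubstList δ0 γ)

def nsubstList : List (LVar × Tm) → (Nat → Option Tm) → List (LVar × Tm)
  | [], _ => []
  | (x, V) :: rest, γ => (x, V.nsubst γ) :: nsubstList rest γ
end

def nsubstIter (γ : Nat → Option Tm) : Nat → Tm → Tm
  | 0, M => M
  | k + 1, M => (nsubstIter γ k M).nsubst γ

/-- `N` is the idempotent resolution of `M` under `γ`. -/
def IdemApply (γ : Nat → Option Tm) (M N : Tm) : Prop :=
  ∃ k, nsubstIter γ k M = N ∧ N.nsubst γ = N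

/-- The idempotent substitution `ι(γ)` is well defined. -/
def IdemGamma (γ : Nat → Option Tm) : Prop :=
  ∃ k, ∀ n V, γ n = some V → nsubstIter γ k V = nsubstIter γ (k + 1) V

/-- Compatibility of a passive and an active configuration. -/
def Compatible (C1 : PConf) (C2 : AConf) : Prop :=
  C1.θ = C2.θ ∧ C1.φ = C2.φ ∧
  (∀ l, ((C1.h l).isSome ∧ (C2.h l).isSome) ↔ l ∈ C1.θ) ∧
  envDisj C1.γ C2.γ ∧
  (∀ n, n ∈ C1.φ ↔ ((C1.γ n).isSome ∨ (C2.γ n).isSome)) ∧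
  IdemGamma (envJoin C1.γ C2.γ) ∧
  (mergeStacks C1.ξ C2.ξ).isSome

/-- ConfCompose `⟨C1 ∥ C2⟩` of compatible configurations, as a relation. -/
def ConfCompose (C1 : PConf) (C2 : AConf) (res : Tm × Heap) : Prop :=
  ∃ K, mergeStacks C1.ξ C2.ξ = some K ∧
    IdemApply (envJoin C1.γ C2.γ) (K.plug C2.M) res.1 ∧
    (∀ l, heapPlus C2.h C1.h l = none → res.2 l = none) ∧
    (∀ l V, heapPlus C2.h C1.h l = some V →
      ∃ W, res.2 l = some W ∧ IdemApply (envJoin C1.γ C2.γ) V W)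

/-! The depth of a term under a name environment. -/

mutual
def Tm.bnamesList : Tm → List Nat
  | .unit => []
  | .int _ => []
  | .lvar _ => []
  | .gvar _ δ => bnamesListL δ
  | .loc _ => []
  | .lam _ M => M.bnamesList
  | .app M N => M.bnamesList ++ N.bnamesList
  | .rec' _ _ M => M.bnamesList
  | .arith _ M N => M.bnamesList ++ N.bnamesList
  | .ite M N P => M.bnamesList ++ N.bnamesList ++ P.bnamesList
  | .ref M => M.bnamesList
  | .deref M => M.bnamesList
  | .assign M N => M.bnamesList ++ N.bnamesList
  | .box M => M.bnamesList
  | .letbox _ M N => M.bnamesList ++ N.bnamesList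
  | .fname _ _ _ _ => []
  | .bname b _ _ => [b]
  | .unbox b _ _ δ => b :: bnamesListL δ

def bnamesListL : List (LVar × Tm) → List Nat
  | [] => []
  | (_, V) :: rest => V.bnamesList ++ bnamesListL rest
end

mutual
/-- Depth of a box name under `γ`. -/
inductive DepthN : (Nat → Option Tm) → Nat → Nat → Prop where
  | mk {γ b V d} : γ b = some V → DepthL γ V.bnamesList d → DepthN γ b d

/-- Sum of `depth_γ(γ(b)) + 1` over a list of box-name occurrences. -/
inductive DepthL : (Nat → Option Tm) → List Nat → Nat → Prop where
  | nil {γ} : DepthL γ [] 0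
  | cons {γ b bs d ds} : DepthN γ b d → DepthL γ bs ds →
      DepthL γ (b :: bs) (d + 1 + ds)
end

/-- `depth_γ(M) = d` -/
def DepthT (γ : Nat → Option Tm) (M : Tm) (d : Nat) : Prop :=
  DepthL γ M.bnamesList d

/-! Auxiliary development for `depth_bound`. -/

/-- Counts of a predicate at even and odd positions of a list. -/
def cnt2 (f : Act → Bool) : List Act → Nat × Nat
  | [] => (0, 0)
  | a :: l => ((cnt2 f l).2 + (if f a then 1 else 0), (cnt2 f l).1)

lemma cnt2_add_eq_countP (f : Act → Bool) (l : List Act) :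
    (cnt2 f l).1 + (cnt2 f l).2 = l.countP f := by
  induction l with
  | nil => simp [cnt2]
  | cons a l ih => simp [cnt2, List.countP_cons]; omega

lemma cnt2_true_le (l : List Act) :
    (cnt2 (fun _ => true) l).1 ≤ (cnt2 (fun _ => true) l).2 + 1 ∧
    (cnt2 (fun _ => true) l).2 ≤ (cnt2 (fun _ => true) l).1 := by
  induction l with
  | nil => simp [cnt2]
  | cons a l ih => simp [cnt2] at *; omega

lemma isAnsB_not_isQbB {a : Act} (h : a.isAnsB = true) : a.isQbB = false := by
  obtain ⟨p, k, s, c⟩ := a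
  unfold Act.isAnsB at h; unfold Act.isQbB
  cases k <;> simp_all

lemma cnt2_split (l : List Act) (h : ∀ a ∈ l, a.isAnsB = true ∨ a.isQbB = true) :
    (cnt2 Act.isAnsB l).1 + (cnt2 Act.isQbB l).1 = (cnt2 (fun _ => true) l).1 ∧
    (cnt2 Act.isAnsB l).2 + (cnt2 Act.isQbB l).2 = (cnt2 (fun _ => true) l).2 := by
  induction l with
  | nil => simp [cnt2]
  | cons a l ih =>
    have ha := h a (by simp)
    have ih' := ih (fun b hb => h b (by simp [hb]))
    rcases ha with ha | ha
    · have := isAnsB_not_isQbB ha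
      simp [cnt2, ha, this] at *; omega
    · rcases h' : a.isAnsB with _ | _
      · simp [cnt2, ha, h'] at *; omega
      · have := isAnsB_not_isQbB h'; simp_all

/-- "Activatable" box names of a term: unbox heads in evaluation-reachable,
    non-frozen positions. -/
def Tm.heads : Tm → List Nat
  | .app M N => M.heads ++ N.heads
  | .arith _ M N => M.heads ++ N.heads
  | .ite M _ _ => M.heads
  | .ref M => M.heads
  | .deref M => M.heads
  | .assign M N => M.heads ++ N.heads
  | .letbox _ M N => M.heads ++ N.heads
  | .unbox b _ _ _ => [b]
  | _ => []

def khs (K : ECtx) : List Nat := (K.plug .unit).heads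
/-! Depth lemmas. -/

lemma depthL_mono {γ γ' : Nat → Option Tm}
    (hext : ∀ n V, γ n = some V → γ' n = some V) :
    ∀ d, ∀ l, DepthL γ l d → DepthL γ' l d := by
  intro d
  induction d using Nat.strong_induction_on with
  | _ d ih =>
    intro l hl
    cases hl with
    | nil => exact .nil
    | cons hn hrest =>
      rename_i b bs db ds
      cases hn with
      | mk hg hdl =>
        rename_i V
        have hdb : DepthL γ' V.bnamesList db := ih db (by omega) _ hdl
        exact .cons (.mk (hext _ _ hg) hdb) (ih ds (by omega) _ hrest)

lemma depthL_perm {γ : Nat → Option Tm} {l l' : List Nat}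
    (hp : l.Perm l') : ∀ d, DepthL γ l d → DepthL γ l' d := by
  induction hp with
  | nil => exact fun d h => h
  | cons x _ ih =>
    intro d h
    cases h with
    | cons hn hrest => exact .cons hn (ih _ hrest)
  | swap x y l =>
    intro d h
    cases h with
    | cons hy hrest =>
      rename_i dy dr
      cases hrest with
      | cons hx hrest2 =>
        rename_i dx ds
        have : dy + 1 + (dx + 1 + ds) = dx + 1 + (dy + 1 + ds) := by omega
        rw [show dy + 1 + (dx + 1 + ds) = dx + 1 + (dy + 1 + ds) from by omega]
        exact .cons hx (.cons hy hrest2)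
  | trans _ _ ih1 ih2 => exact fun d h => ih2 _ (ih1 _ h)

lemma depthL_append_split {γ : Nat → Option Tm} {l1 l2 : List Nat} :
    ∀ d, DepthL γ (l1 ++ l2) d →
    ∃ d1 d2, DepthL γ l1 d1 ∧ DepthL γ l2 d2 ∧ d1 + d2 = d := by
  induction l1 with
  | nil => exact fun d h => ⟨0, d, .nil, h, by omega⟩
  | cons b bs ih =>
    intro d h
    cases h with
    | cons hn hrest =>
      rename_i db ds
      obtain ⟨d1, d2, h1, h2, he⟩ := ih _ hrest
      exact ⟨db + 1 + d1, d2, .cons hn h1, h2, by omega⟩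

lemma depthL_sublist {γ : Nat → Option Tm} {l' l : List Nat}
    (hs : l'.Sublist l) : ∀ d, DepthL γ l d → ∃ d', DepthL γ l' d' ∧ d' ≤ d := by
  induction hs with
  | slnil => exact fun d h => ⟨d, h, le_refl _⟩
  | cons a _ ih =>
    intro d h
    cases h with
    | cons hn hrest =>
      obtain ⟨d', hd', hle⟩ := ih _ hrest
      exact ⟨d', hd', by omega⟩
  | cons_cons a _ ih =>
    intro d h
    cases h with
    | cons hn hrest =>
      rename_i db ds
      obtain ⟨d', hd', hle⟩ := ih _ hrest
      exact ⟨db + 1 + d', .cons hn hd', by omega⟩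
/-! Heads lemmas. -/

theorem heads_lsubst : ∀ (M : Tm) (δ : List (LVar × Tm)),
    (∀ p ∈ δ, Tm.heads p.2 = []) → (M.lsubst δ).heads = M.heads
  | .unit, δ, h => rfl
  | .int _, δ, h => rfl
  | .lvar x, δ, hδ => by
    simp only [Tm.lsubst]
    cases hl : lookup δ x with
    | none => rfl
    | some W =>
      have : W ∈ δ.map Prod.snd := by
        unfold lookup at hl
        cases hf : δ.find? (fun p => p.1 == x) with
        | none => simp [hf] at hl
        | some p =>
          simp [hf] at hl
          subst hl
          exact List.mem_map_of_mem (List.mem_of_find?_eq_some hf)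
      obtain ⟨p, hp, hpe⟩ := List.mem_map.mp this
      simp only [Option.getD_some]
      rw [← hpe]; exact hδ p hp
  | .gvar u δ0, δ, h => rfl
  | .loc l, δ, h => rfl
  | .lam x M, δ, h => rfl
  | .app M N, δ, hδ => by
    simp only [Tm.lsubst, Tm.heads, heads_lsubst M δ hδ, heads_lsubst N δ hδ]
  | .rec' f x M, δ, h => rfl
  | .arith op M N, δ, hδ => by
    simp only [Tm.lsubst, Tm.heads, heads_lsubst M δ hδ, heads_lsubst N δ hδ]
  | .ite M N P, δ, hδ => by
    simp only [Tm.lsubst, Tm.heads, heads_lsubst M δ hδ]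
  | .ref M, δ, hδ => by
    simp only [Tm.lsubst, Tm.heads, heads_lsubst M δ hδ]
  | .deref M, δ, hδ => by
    simp only [Tm.lsubst, Tm.heads, heads_lsubst M δ hδ]
  | .assign M N, δ, hδ => by
    simp only [Tm.lsubst, Tm.heads, heads_lsubst M δ hδ, heads_lsubst N δ hδ]
  | .box M, δ, h => rfl
  | .letbox u M N, δ, hδ => by
    simp only [Tm.lsubst, Tm.heads, heads_lsubst M δ hδ, heads_lsubst N δ hδ]
  | .fname f T1 T2 j, δ, h => rfl
  | .bname b G T, δ, h => rfl
  | .unbox b G T δ0, δ, h => rfl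

theorem heads_sublist_bnames : ∀ M : Tm, M.heads.Sublist M.bnamesList
  | .unit => List.nil_sublist _
  | .int _ => List.nil_sublist _
  | .lvar _ => List.nil_sublist _
  | .gvar _ _ => List.nil_sublist _
  | .loc _ => List.nil_sublist _
  | .lam _ _ => List.nil_sublist _
  | .app M N => List.Sublist.append (heads_sublist_bnames M) (heads_sublist_bnames N)
  | .rec' _ _ _ => List.nil_sublist _
  | .arith _ M N => List.Sublist.append (heads_sublist_bnames M) (heads_sublist_bnames N)
  | .ite M N P => (heads_sublist_bnames M).trans
      ((List.sublist_append_left _ _).trans (List.sublist_append_left _ _))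
  | .ref M => heads_sublist_bnames M
  | .deref M => heads_sublist_bnames M
  | .assign M N => List.Sublist.append (heads_sublist_bnames M) (heads_sublist_bnames N)
  | .box _ => List.nil_sublist _
  | .letbox _ M N => List.Sublist.append (heads_sublist_bnames M) (heads_sublist_bnames N)
  | .fname _ _ _ _ => List.nil_sublist _
  | .bname _ _ _ => List.nil_sublist _
  | .unbox b _ _ _ => (List.nil_sublist _).cons₂ b
/-! Plugging and heads. -/

lemma perm_shuffle (a b c : List Nat) : ((a ++ b) ++ c).Perm ((a ++ c) ++ b) := by
  rw [List.append_assoc, List.append_assoc]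
  exact List.Perm.append_left a List.perm_append_comm

lemma heads_plug : ∀ (K : ECtx) (M : Tm),
    (K.plug M).heads.Perm (khs K ++ M.heads) := by
  intro K
  induction K with
  | hole => intro M; simp [khs, ECtx.plug, Tm.heads]
  | appL K N ih =>
    intro M; simp only [ECtx.plug, khs, Tm.heads] at *
    exact ((ih M).append_right _).trans (perm_shuffle _ _ _)
  | appR V K ih =>
    intro M; simp only [ECtx.plug, khs, Tm.heads] at *
    exact (((ih M).append_left _)).trans (by rw [List.append_assoc])
  | arithL op K N ih =>
    intro M; simp only [ECtx.plug, khs, Tm.heads] at *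
    exact ((ih M).append_right _).trans (perm_shuffle _ _ _)
  | arithR op V K ih =>
    intro M; simp only [ECtx.plug, khs, Tm.heads] at *
    exact (((ih M).append_left _)).trans (by rw [List.append_assoc])
  | ite K N P ih =>
    intro M; simp only [ECtx.plug, khs, Tm.heads] at *
    exact ih M
  | ref K ih =>
    intro M; simp only [ECtx.plug, khs, Tm.heads] at *
    exact ih M
  | deref K ih =>
    intro M; simp only [ECtx.plug, khs, Tm.heads] at *
    exact ih M
  | assignL K N ih =>
    intro M; simp only [ECtx.plug, khs, Tm.heads] at *
    exact ((ih M).append_right _).trans (perm_shuffle _ _ _)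
  | assignR V K ih =>
    intro M; simp only [ECtx.plug, khs, Tm.heads] at *
    exact (((ih M).append_left _)).trans (by rw [List.append_assoc])
  | letboxL u K N ih =>
    intro M; simp only [ECtx.plug, khs, Tm.heads] at *
    exact ((ih M).append_right _).trans (perm_shuffle _ _ _)
  | letboxR u V K ih =>
    intro M; simp only [ECtx.plug, khs, Tm.heads] at *
    exact (((ih M).append_left _)).trans (by rw [List.append_assoc])

lemma toTm_heads (A : AVal) : A.toTm.heads = [] := by
  cases A <;> rfl

lemma runBox_heads_sublist (V : Tm) (δ : List (LVar × Tm))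
    (hδ : ∀ p ∈ δ, Tm.heads p.2 = []) :
    (runBox V δ).heads.Sublist V.bnamesList := by
  cases V with
  | box M =>
    show (M.lsubst δ).heads.Sublist (Tm.box M).bnamesList
    rw [heads_lsubst M δ hδ]
    exact heads_sublist_bnames M
  | bname b G T =>
    show Tm.heads (.unbox b G T δ) |>.Sublist (Tm.bname b G T).bnamesList
    exact List.Sublist.refl _
  | _ => first
    | exact heads_sublist_bnames _
/-! Dual-trace lemmas. -/

lemma dual_dual (a : Act) : a.dual.dual = a := by
  obtain ⟨p, k, s, c⟩ := a
  simp [Act.dual]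

lemma dualTrace_dualTrace (t : List Act) : dualTrace (dualTrace t) = t := by
  simp [dualTrace, List.map_map, Function.comp_def, dual_dual]

lemma isAnsB_dual (a : Act) : a.dual.isAnsB = a.isAnsB := rfl
lemma isQbB_dual (a : Act) : a.dual.isQbB = a.isQbB := rfl

lemma countP_dual (f : Act → Bool) (hf : ∀ x, f x.dual = f x) (t : List Act) :
    (dualTrace t).countP f = t.countP f := by
  induction t with
  | nil => rfl
  | cons a t ih => simp [dualTrace, List.countP_cons, hf] at *; omega

lemma cnt2_dual (f : Act → Bool) (hf : ∀ x, f x.dual = f x) (t : List Act) :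
    cnt2 f (dualTrace t) = cnt2 f t := by
  induction t with
  | nil => rfl
  | cons a t ih =>
    simp only [dualTrace, List.map_cons, cnt2, hf]
    simp only [dualTrace] at ih
    rw [ih]

/-! Environment lemmas. -/

lemma envJoin_left {g x : Nat → Option Tm} {n : Nat} {V : Tm} (h : g n = some V) :
    envJoin g x n = some V := by
  simp [envJoin, h, Option.orElse]

lemma envJoin_right' {g x : Nat → Option Tm} {n : Nat} {V : Tm}
    (hg : g n = none) (hx : x n = some V) : envJoin g x n = some V := by
  simp [envJoin, hg, hx, Option.orElse]

lemma envJoin_isSome {g x : Nat → Option Tm} {n : Nat} :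
    (envJoin g x n).isSome ↔ (g n).isSome ∨ (x n).isSome := by
  cases h : g n <;> simp [envJoin, h, Option.orElse]

/-! Name-domain lemmas for abstraction. -/

lemma absVal_names {V : Tm} {A : AVal} {γA : Nat → Option Tm}
    (h : AbsVal V A γA) : ∀ n, (γA n).isSome → A.name = some n := by
  cases h with
  | unit => intro n hn; simp [emptyEnv] at hn
  | int => intro n hn; simp [emptyEnv] at hn
  | loc => intro n hn; simp [emptyEnv] at hn
  | fn hV =>
    intro n hn
    simp only [single] at hn
    split at hn
    · rename_i he; subst he; rfl
    · simp at hn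
  | bx hV =>
    intro n hn
    simp only [single] at hn
    split at hn
    · rename_i he; subst he; rfl
    · simp at hn

lemma absSubst_names {δ : List (LVar × Tm)} {ρ : List (LVar × AVal)}
    {γA : Nat → Option Tm} (h : AbsSubst δ ρ γA) :
    ∀ n, (γA n).isSome → n ∈ rhoNames ρ := by
  induction h with
  | nil => intro n hn; simp [emptyEnv] at hn
  | cons hv _ _ ih =>
    intro n hn
    rw [envJoin_isSome] at hn
    rcases hn with hn | hn
    · exact ⟨_, List.mem_cons_self, absVal_names hv n hn⟩
    · obtain ⟨p, hp, hpn⟩ := ih n hn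
      exact ⟨p, List.mem_cons_of_mem _ hp, hpn⟩

lemma envJoin_none {g x : Nat → Option Tm} {n : Nat} (hg : g n = none) :
    envJoin g x n = x n := by
  simp [envJoin, hg, Option.orElse]
/-! The main inductive bound. -/

lemma main_bound : ∀ (n : Nat) (t : List Act) (P : PConf) (A : AConf) (D1 D2 : Conf)
    (g : Nat → Option Tm) (dM : Nat) (bsP bsA : List Nat) (ξP1 ξP2 ξA1 ξA2 : List ECtx),
    t.length ≤ n →
    StepsV (.inl P) t D1 →
    StepsV (.inr A) (dualTrace t) D2 →
    (∀ a ∈ t, a.isAnsB = true ∨ a.isQbB = true) →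
    (∀ t1 t2, t = t1 ++ t2 →
      (cnt2 Act.isAnsB t1).1 ≤ bsP.length + (cnt2 Act.isQbB t1).2 ∧
      (cnt2 Act.isAnsB t1).2 ≤ bsA.length + (cnt2 Act.isQbB t1).1) →
    (∀ m V, P.γ m = some V → g m = some V) →
    (∀ m V, A.γ m = some V → g m = some V) →
    (∀ m, (g m).isSome → m ∈ P.φ) →
    (∀ m, (g m).isSome → m ∈ A.φ) →
    P.ξ = ξP1 ++ ξP2 →
    A.ξ = ξA1 ++ ξA2 →
    List.Forall₂ (fun d K => DepthL g (khs K) d) bsP ξP1 →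
    List.Forall₂ (fun d K => DepthL g (khs K) d) bsA ξA1 →
    DepthL g A.M.heads dM →
    t.countP Act.isQbB ≤ dM + bsP.sum + bsA.sum := by
  intro n
  induction n with
  | zero =>
    intro t P A D1 D2 g dM bsP bsA ξP1 ξP2 ξA1 ξA2 hlen
    have : t = [] := List.length_eq_zero_iff.mp (Nat.le_zero.mp hlen)
    subst this
    intros; simp
  | succ n ih =>
    intro t P A D1 D2 g dM bsP bsA ξP1 ξP2 ξA1 ξA2 hlen h1 h2 honly Hbal
      hgP hgA hφP hφA hPxi hAxi hbsP hbsA hdM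
    cases t with
    | nil => simp
    | cons a t' =>
      have hlen' : t'.length ≤ n := by simpa using hlen
      obtain ⟨pl, k, asg, aχ⟩ := a
      -- invert the two trace derivations
      cases h1 with
      | vis hv1 hs1 =>
        cases hv1 with
        | o hO =>
          simp only [dualTrace, List.map_cons] at h2
          cases h2 with
          | vis hv2 hs2 =>
            cases hv2 with
            | p hPt =>
              cases pl with
              | true => cases hO
              | false =>
                have hPt' : PTrans A ⟨true, k, asg, aχ⟩ _ := hPt
                clear hPt
                have honly' : ∀ x ∈ dualTrace t', x.isAnsB = true ∨ x.isQbB = true := by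
                  intro x hx
                  obtain ⟨y, hy, rfl⟩ := List.mem_map.mp hx
                  simpa [isAnsB_dual, isQbB_dual] using honly y (List.mem_cons_of_mem _ hy)
                have hcnt : (dualTrace t').countP Act.isQbB = t'.countP Act.isQbB :=
                  countP_dual Act.isQbB isQbB_dual _
                cases hPt' with
                | pa hval habsV hres habsH hdisj hfr hSgiff hSgle =>
                  rename_i V i T Sg2 h2 γ2 φ2 ξ2 θ2 A_ γA h' γH
                  cases hO with
                  | oa hθ hφn =>
                    rename_i Sg1 h1 γ1 φ1 K ξr θ1 i2 T2
                    -- the passive budget stack is nonempty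
                    have hb1 := Hbal [⟨false, .ans A_, asg, aχ⟩] t' rfl
                    have hlenP : 1 ≤ bsP.length := by
                      simpa [cnt2, Act.isAnsB, Act.isQbB] using hb1.1
                    cases bsP with
                    | nil => simp at hlenP
                    | cons dK' bsP' =>
                    cases hbsP with
                    | cons hdK' htail =>
                    rename_i K0 ξP1'
                    obtain ⟨hKK0, hξr⟩ : K = K0 ∧ ξr = ξP1' ++ ξP2 := by
                      simpa [List.cons_append] using hPxi
                    subst hKK0
                    -- depth of the new active term
                    have hsrc : DepthL g (khs K ++ A_.toTm.heads) dK' := by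
                      rw [toTm_heads, List.append_nil]; exact hdK'
                    have hKheads : DepthL g (Tm.heads (K.plug A_.toTm)) dK' :=
                      depthL_perm (heads_plug K A_.toTm).symm _ hsrc
                    -- extended environment
                    have hgg' : ∀ m W, g m = some W →
                        envJoin g (envJoin γA γH) m = some W := fun m W h => envJoin_left h
                    have hnew : ∀ m W, envJoin γA γH m = some W →
                        envJoin g (envJoin γA γH) m = some W := by
                      intro m W h
                      have hsome : (γA m).isSome ∨ (γH m).isSome :=
                        envJoin_isSome.mp (by rw [h]; rfl)
                      have hnφ : m ∉ φ2 := hfr m hsome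
                      have hgnone : g m = none := by
                        cases hg : g m with
                        | none => rfl
                        | some u => exact absurd (hφA m (by simp [hg])) hnφ
                      rw [envJoin_none hgnone]; exact h
                    have hgP_next : ∀ m W,
                        envJoin γ2 (envJoin γA γH) m = some W →
                        envJoin g (envJoin γA γH) m = some W := by
                      intro m W h
                      cases hg2 : γ2 m with
                      | some u =>
                        rw [envJoin_left hg2] at h
                        exact hgg' m W (h ▸ hgA m u hg2)
                      | none =>
                        rw [envJoin_none hg2] at h
                        exact hnew m W h
                    have hgA_next : ∀ m W, γ1 m = some W →
                        envJoin g (envJoin γA γH) m = some W :=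
                      fun m W h => hgg' _ _ (hgP m W h)
                    have hφP_next : ∀ m, ((envJoin g (envJoin γA γH)) m).isSome →
                        m ∈ φ2 ∪ envDom γA ∪ envDom γH := by
                      intro m hm
                      rcases envJoin_isSome.mp hm with h | h
                      · exact Or.inl (Or.inl (hφA m h))
                      · rcases envJoin_isSome.mp h with h | h
                        · exact Or.inl (Or.inr h)
                        · exact Or.inr h
                    have hφA_next : ∀ m, ((envJoin g (envJoin γA γH)) m).isSome →
                        m ∈ φ1 ∪ valNames A_ ∪ chiNames aχ := by
                      intro m hm
                      rcases envJoin_isSome.mp hm with h | h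
                      · exact Or.inl (Or.inl (hφP m h))
                      · rcases envJoin_isSome.mp h with h | h
                        · exact Or.inl (Or.inr (absVal_names habsV m h))
                        · exact Or.inr ((habsH.2.2.2 m).mp h)
                    -- balance condition
                    have Hbal_next : ∀ t1 t2, dualTrace t' = t1 ++ t2 →
                        (cnt2 Act.isAnsB t1).1 ≤ bsA.length + (cnt2 Act.isQbB t1).2 ∧
                        (cnt2 Act.isAnsB t1).2 ≤ bsP'.length + (cnt2 Act.isQbB t1).1 := by
                      intro t1 t2 heq
                      have ht' : t' = dualTrace t1 ++ dualTrace t2 := by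
                        have h0 := congrArg dualTrace heq
                        rw [dualTrace_dualTrace] at h0
                        rw [h0]; simp [dualTrace]
                      have hb := Hbal (⟨false, .ans A_, asg, aχ⟩ :: dualTrace t1)
                        (dualTrace t2) (by rw [ht', List.cons_append])
                      simp [cnt2, Act.isAnsB, Act.isQbB, List.length_cons,
                        cnt2_dual Act.isAnsB isAnsB_dual, cnt2_dual Act.isQbB isQbB_dual] at hb ⊢
                      omega
                    -- recursive call
                    have hrec := ih (dualTrace t')
                      ⟨Sg2, h2, envJoin γ2 (envJoin γA γH),
                        φ2 ∪ envDom γA ∪ envDom γH, ξ2, chiDom aχ⟩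
                      ⟨K.plug A_.toTm, i2, T2, asg ++ Sg1, heapPlus (toHeap aχ) h1, γ1,
                        φ1 ∪ valNames A_ ∪ chiNames aχ, ξr, chiDom aχ⟩
                      D2 D1 (envJoin g (envJoin γA γH)) dK' bsA bsP'
                      ξA1 ξA2 ξP1' ξP2
                      (by simpa [dualTrace] using hlen')
                      hs2
                      (by rw [dualTrace_dualTrace]; exact hs1)
                      honly' Hbal_next hgP_next hgA_next hφP_next hφA_next
                      hAxi hξr
                      (hbsA.imp (fun _ _ h => depthL_mono hgg' _ _ h))
                      (htail.imp (fun _ _ h => depthL_mono hgg' _ _ h))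
                      (depthL_mono hgg' _ _ hKheads)
                    rw [hcnt] at hrec
                    simp [List.countP_cons, List.sum_cons, Act.isQbB] at hrec ⊢
                    omega
                | pqf hK hval hfφ hfγ habsV hres habsH hdisj hfr hSgiff hSgle =>
                  rcases honly _ (List.mem_cons_self) with hc | hc <;>
                    simp [Act.isAnsB, Act.isQbB] at hc
                | pqb hK hbφ hbγ habsS hres habsH hdisj hfr hSgiff hSgle =>
                  rename_i K b G0 T0 δ ρ i T Sg2 h2 γ2 φ2 ξ2 θ2 γA h' γH
                  cases hO with
                  | oqb hVb hθ hφn =>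
                    rename_i Sg1 h1 γ1 φ1 ξ1 θ1 V i3 T3
                    -- decompose the depth of the active term
                    have hperm : DepthL g (khs K ++ Tm.heads (.unbox b G0 T0 δ)) dM :=
                      depthL_perm (heads_plug K _) _ hdM
                    obtain ⟨dK, d2, hdK, hd2, hsum⟩ := depthL_append_split _ hperm
                    obtain ⟨db, hdb, hd2eq⟩ : ∃ db, DepthN g b db ∧ d2 = db + 1 := by
                      cases hd2 with
                      | cons hn hnil => cases hnil; exact ⟨_, hn, rfl⟩
                    obtain ⟨Vg, hgb, hdVg⟩ : ∃ Vg, g b = some Vg ∧ DepthL g Vg.bnamesList db := by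
                      cases hdb with | mk h1 h2 => exact ⟨_, h1, h2⟩
                    have hgb' : g b = some V := hgP b V hVb
                    have hVgV : Vg = V := by rw [hgb'] at hgb; exact (Option.some.inj hgb).symm
                    subst hVgV
                    -- depth of the new active term
                    have hδtm : ∀ p ∈ ρ.map (fun p => (p.1, p.2.toTm)), Tm.heads p.2 = [] := by
                      intro p hp
                      obtain ⟨q, _, rfl⟩ := List.mem_map.mp hp
                      exact toTm_heads _
                    obtain ⟨dV', hdV', hleV⟩ :=
                      depthL_sublist (runBox_heads_sublist Vg _ hδtm) _ hdVg
                    -- the extended environment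
                    have hgg' : ∀ m W, g m = some W →
                        envJoin g (envJoin γA γH) m = some W := fun m W h => envJoin_left h
                    have hnew : ∀ m W, envJoin γA γH m = some W →
                        envJoin g (envJoin γA γH) m = some W := by
                      intro m W h
                      have hsome : (γA m).isSome ∨ (γH m).isSome :=
                        envJoin_isSome.mp (by rw [h]; rfl)
                      have hnφ : m ∉ φ2 := hfr m hsome
                      have hgnone : g m = none := by
                        cases hg : g m with
                        | none => rfl
                        | some u => exact absurd (hφA m (by simp [hg])) hnφ
                      rw [envJoin_none hgnone]; exact h
                    have hgP_next : ∀ m W,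
                        envJoin γ2 (envJoin γA γH) m = some W →
                        envJoin g (envJoin γA γH) m = some W := by
                      intro m W h
                      cases hg2 : γ2 m with
                      | some u =>
                        rw [envJoin_left hg2] at h
                        exact hgg' m W (h ▸ hgA m u hg2)
                      | none =>
                        rw [envJoin_none hg2] at h
                        exact hnew m W h
                    have hgA_next : ∀ m W, γ1 m = some W →
                        envJoin g (envJoin γA γH) m = some W :=
                      fun m W h => hgg' _ _ (hgP m W h)
                    have hφP_next : ∀ m, ((envJoin g (envJoin γA γH)) m).isSome →
                        m ∈ φ2 ∪ envDom γA ∪ envDom γH := by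
                      intro m hm
                      rcases envJoin_isSome.mp hm with h | h
                      · exact Or.inl (Or.inl (hφA m h))
                      · rcases envJoin_isSome.mp h with h | h
                        · exact Or.inl (Or.inr h)
                        · exact Or.inr h
                    have hφA_next : ∀ m, ((envJoin g (envJoin γA γH)) m).isSome →
                        m ∈ φ1 ∪ rhoNames ρ ∪ chiNames aχ := by
                      intro m hm
                      rcases envJoin_isSome.mp hm with h | h
                      · exact Or.inl (Or.inl (hφP m h))
                      · rcases envJoin_isSome.mp h with h | h
                        · exact Or.inl (Or.inr (absSubst_names habsS m h))
                        · exact Or.inr ((habsH.2.2.2 m).mp h)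
                    -- stacks
                    have hPxi' : ξ1 = ξP1 ++ ξP2 := hPxi
                    have hAxi' : ξ2 = ξA1 ++ ξA2 := hAxi
                    have hbsP_next : List.Forall₂
                        (fun d K => DepthL (envJoin g (envJoin γA γH)) (khs K) d)
                        (dK :: bsA) (K :: ξA1) :=
                      .cons (depthL_mono hgg' _ _ hdK)
                        (hbsA.imp (fun _ _ h => depthL_mono hgg' _ _ h))
                    have hbsA_next : List.Forall₂
                        (fun d K => DepthL (envJoin g (envJoin γA γH)) (khs K) d)
                        bsP ξP1 :=
                      hbsP.imp (fun _ _ h => depthL_mono hgg' _ _ h)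
                    -- balance condition
                    have Hbal_next : ∀ t1 t2, dualTrace t' = t1 ++ t2 →
                        (cnt2 Act.isAnsB t1).1 ≤ (dK :: bsA).length + (cnt2 Act.isQbB t1).2 ∧
                        (cnt2 Act.isAnsB t1).2 ≤ bsP.length + (cnt2 Act.isQbB t1).1 := by
                      intro t1 t2 heq
                      have ht' : t' = dualTrace t1 ++ dualTrace t2 := by
                        have h0 := congrArg dualTrace heq
                        rw [dualTrace_dualTrace] at h0
                        rw [h0]; simp [dualTrace]
                      have hb := Hbal (⟨false, .qb b ρ, asg, aχ⟩ :: dualTrace t1)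
                        (dualTrace t2) (by rw [ht', List.cons_append])
                      simp [cnt2, Act.isAnsB, Act.isQbB, List.length_cons,
                        cnt2_dual Act.isAnsB isAnsB_dual, cnt2_dual Act.isQbB isQbB_dual] at hb ⊢
                      omega
                    -- recursive call
                    have hrec := ih (dualTrace t')
                      ⟨Sg2, h2, envJoin γ2 (envJoin γA γH),
                        φ2 ∪ envDom γA ∪ envDom γH, K :: ξ2, chiDom aχ⟩
                      ⟨runBox Vg (ρ.map (fun p => (p.1, p.2.toTm))), i3, T3, asg ++ Sg1,
                        heapPlus (toHeap aχ) h1, γ1,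
                        φ1 ∪ rhoNames ρ ∪ chiNames aχ, ξ1, chiDom aχ⟩
                      D2 D1 (envJoin g (envJoin γA γH)) dV' (dK :: bsA) bsP
                      (K :: ξA1) ξA2 ξP1 ξP2
                      (by simpa [dualTrace] using hlen')
                      hs2
                      (by rw [dualTrace_dualTrace]; exact hs1)
                      honly' Hbal_next hgP_next hgA_next hφP_next hφA_next
                      (by show K :: ξ2 = (K :: ξA1) ++ ξA2; rw [hAxi', List.cons_append])
                      hPxi'
                      hbsP_next hbsA_next
                      (depthL_mono hgg' _ _ hdV')
                    rw [hcnt] at hrec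
                    simp [List.countP_cons, List.sum_cons, Act.isQbB] at hrec ⊢
                    omega

/-- **Depth bound on run-box questions**: along a τ-free interaction of
    compatible configurations consisting only of answer and run-box actions
    in which every prefix has at least as many run-box questions as answers,
    the number of run-box questions is bounded by the depth of the active
    term. -/
theorem depth_bound {C1 : PConf} {C2 : AConf} {t : List Act} {D1 D2 : Conf}
    {d : Nat}
    (hc : Compatible C1 C2)
    (h1 : StepsV (.inl C1) t D1)
    (h2 : StepsV (.inr C2) (dualTrace t) D2)
    (honly : ∀ a ∈ t, a.isAnsB = true ∨ a.isQbB = true)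
    (hpre : ∀ t1 t2, t = t1 ++ t2 →
      t1.countP Act.isAnsB ≤ t1.countP Act.isQbB)
    (hd : DepthT (envJoin C1.γ C2.γ) C2.M d) :
    t.countP Act.isQbB ≤ d := by
  set g := envJoin C1.γ C2.γ with hgdef
  obtain ⟨hθ, hφeq, hheap, hdisj, hφiff, hidem, hms⟩ := hc
  have hgP : ∀ m V, C1.γ m = some V → g m = some V := fun m V h => envJoin_left h
  have hgA : ∀ m V, C2.γ m = some V → g m = some V := by
    intro m V h
    have h1n : C1.γ m = none := by
      cases h1c : C1.γ m with
      | none => rfl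
      | some u => exact absurd ⟨by simp [h1c], by simp [h]⟩ (hdisj m)
    exact envJoin_right' h1n h
  have hφP : ∀ m, (g m).isSome → m ∈ C1.φ := by
    intro m hm
    exact (hφiff m).mpr (envJoin_isSome.mp hm)
  have hφA : ∀ m, (g m).isSome → m ∈ C2.φ := by
    intro m hm
    rw [← hφeq]
    exact hφP m hm
  obtain ⟨d0, hd0, hle⟩ := depthL_sublist (heads_sublist_bnames C2.M) _ hd
  have Hbal0 : ∀ t1 t2, t = t1 ++ t2 →
      (cnt2 Act.isAnsB t1).1 ≤ ([] : List Nat).length + (cnt2 Act.isQbB t1).2 ∧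
      (cnt2 Act.isAnsB t1).2 ≤ ([] : List Nat).length + (cnt2 Act.isQbB t1).1 := by
    intro t1 t2 heq
    have hp := hpre t1 t2 heq
    have honly1 : ∀ a ∈ t1, a.isAnsB = true ∨ a.isQbB = true := by
      intro a ha
      exact honly a (heq ▸ List.mem_append_left _ ha)
    have hs := cnt2_split t1 honly1
    have ht := cnt2_true_le t1
    have ha := cnt2_add_eq_countP Act.isAnsB t1
    have hq := cnt2_add_eq_countP Act.isQbB t1
    simp only [List.length_nil, Nat.zero_add]
    omega
  have hmain := main_bound t.length t C1 C2 D1 D2 g d0 [] [] [] C1.ξ [] C2.ξ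
    (le_refl _) h1 h2 honly Hbal0 hgP hgA hφP hφA rfl rfl .nil .nil hd0
  simp at hmain
  omega
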